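/- arXiv:1710.01774 — 2 statements merged into one kernel-verified Lean document; each statement's English description precedes it below -/
import Mathlib

section
/- Let X be an infinite subset of Zar(F). Then the union over all cofinite subsets Y of X of the ideals J(Y) = ⋂_{V∈Y} 𝔪_V equals J(lim X) = ⋂_{U ∈ lim X} 𝔪_U, where lim X is the set of patch limit points of X. -/
open Set

/-- A subring `V` of a field `F` is a valuation ring of `F` (with quotient field `F`). -/
def IsValSubring (F : Type*) [Field F] (V : Subring F) : Prop :=
  ∀ t : F, t ≠ 0 → t ∈ V ∨ t⁻¹ ∈ V

/-- The Zariski-Riemann space of the field `F`: the set of valuation rings of `F`. -/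
def Zar (F : Type*) [Field F] : Type _ := {V : Subring F // IsValSubring F V}

/-- The patch (constructible) topology on `Zar F`, generated by the sets
`{V : x ∈ V}` and `{V : y ∉ V}` for `x, y ∈ F`. -/
instance Zar.patchTopology (F : Type*) [Field F] : TopologicalSpace (Zar F) :=
  TopologicalSpace.generateFrom
    ({S | ∃ x : F, S = {V : Zar F | x ∈ V.1}} ∪ {S | ∃ y : F, S = {V : Zar F | y ∉ V.1}})

variable {F : Type*} [Field F]

/-- The maximal ideal of a valuation ring of `F`, as a subset of `F`. -/
def mIdeal (V : Zar F) : Set F := {x : F | x ∈ V.1 ∧ (x = 0 ∨ x⁻¹ ∉ V.1)}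

/-- `A(X)`: the intersection of the valuation rings in `X`, as a subset of `F`. -/
def aSet (X : Set (Zar F)) : Set F := ⋂ V ∈ X, ((V : Zar F).1 : Set F)

/-- `A(X)` as a subring of `F`. -/
def ASub (X : Set (Zar F)) : Subring F := ⨅ V ∈ X, (V : Zar F).1

/-- `J(X)`: the intersection of the maximal ideals of the valuation rings in `X`. -/
def jSet (X : Set (Zar F)) : Set F := ⋂ V ∈ X, mIdeal V

/-- The set of limit points of `X` in the patch topology of `Zar F`. -/
def limPts (X : Set (Zar F)) : Set (Zar F) :=
  {V : Zar F | ∀ U : Set (Zar F), IsOpen U → V ∈ U → ∃ W ∈ X, W ≠ V ∧ W ∈ U}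

/-!
With the patch topology, `Zar F` is a compact T1 space: an ultrafilter `𝒰` converges to the
valuation ring `{x | x ∈ V for 𝒰-almost all V}`. For `a ∈ F` the condition `a ∈ 𝔪_V` reads
`a ∈ V ∧ a⁻¹ ∉ V` (if `a ≠ 0`), so `C_a = {V | a ∈ 𝔪_V}` is clopen. Both sides of the identity
say something about `C_a`: `a` lies in the left side iff `X \ C_a` is finite, and in the right
side iff every accumulation point of `X` lies in `C_a`. These agree for a clopen `C` in a compact
T1 space: an infinite `X \ C` accumulates at some point of `C`, where `C` is a neighbourhood
missing `X \ C`; conversely an accumulation point outside `C` has the neighbourhood `Cᶜ`, which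
meets `X` in infinitely many points.
-/

open Filter Topology

theorem derivedSet_subset_iff_finite_sdiff {X : Type*} [TopologicalSpace X] [CompactSpace X]
    [T1Space X] {s C : Set X} (hC : IsClopen C) : derivedSet s ⊆ C ↔ (s \ C).Finite := by
  constructor
  · intro hsC
    by_contra hinf
    obtain ⟨x, hx⟩ := Set.Infinite.exists_accPt_principal hinf
    have hxC : x ∈ C := hsC (hx.mono (principal_mono.2 sdiff_subset))
    have := Set.Infinite.of_accPt (hx.nhds_inter (hC.isOpen.mem_nhds hxC))
    simp at this
  · intro hfin x hx
    by_contra hxC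
    have := Set.Infinite.of_accPt (hx.nhds_inter (hC.isClosed.isOpen_compl.mem_nhds hxC))
    exact this (hfin.subset fun y hy => ⟨hy.2, hy.1⟩)

namespace Zar

theorem isOpen_setOf_mem (x : F) : IsOpen {V : Zar F | x ∈ V.1} :=
  TopologicalSpace.GenerateOpen.basic _ (Or.inl ⟨x, rfl⟩)

theorem isOpen_setOf_notMem (y : F) : IsOpen {V : Zar F | y ∉ V.1} :=
  TopologicalSpace.GenerateOpen.basic _ (Or.inr ⟨y, rfl⟩)

instance : T1Space (Zar F) := by
  refine t1Space_iff_exists_open.2 fun V W hVW => ?_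
  obtain ⟨x, hx⟩ : ∃ x, ¬(x ∈ V.1 ↔ x ∈ W.1) := by
    by_contra! h
    exact hVW (Subtype.ext (SetLike.ext h))
  by_cases hxV : x ∈ V.1
  · exact ⟨_, isOpen_setOf_mem x, hxV, fun hxW => hx (iff_of_true hxV hxW)⟩
  · exact ⟨_, isOpen_setOf_notMem x, hxV, fun hxW => hx (iff_of_false hxV hxW)⟩

def ultrafilterLimRing (𝒰 : Ultrafilter (Zar F)) : Subring F where
  carrier := {x : F | {V : Zar F | x ∈ V.1} ∈ 𝒰}
  one_mem' := univ_mem' fun V => one_mem V.1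
  mul_mem' ha hb := mem_of_superset (inter_mem ha hb)
    fun V (hV : _ ∈ V.1 ∧ _ ∈ V.1) => mul_mem hV.1 hV.2
  add_mem' ha hb := mem_of_superset (inter_mem ha hb)
    fun V (hV : _ ∈ V.1 ∧ _ ∈ V.1) => add_mem hV.1 hV.2
  zero_mem' := univ_mem' fun V => zero_mem V.1
  neg_mem' ha := mem_of_superset ha fun V (hV : _ ∈ V.1) => neg_mem hV

theorem mem_ultrafilterLimRing {𝒰 : Ultrafilter (Zar F)} {x : F} :
    x ∈ ultrafilterLimRing 𝒰 ↔ {V : Zar F | x ∈ V.1} ∈ 𝒰 := Iff.rfl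

theorem isValSubring_ultrafilterLimRing (𝒰 : Ultrafilter (Zar F)) :
    IsValSubring F (ultrafilterLimRing 𝒰) := by
  intro t ht
  simp only [mem_ultrafilterLimRing]
  refine (𝒰.mem_or_compl_mem {V : Zar F | t ∈ V.1}).imp id fun h => mem_of_superset h ?_
  intro V hV
  exact (V.2 t ht).resolve_left hV

def ultrafilterLim (𝒰 : Ultrafilter (Zar F)) : Zar F :=
  ⟨ultrafilterLimRing 𝒰, isValSubring_ultrafilterLimRing 𝒰⟩

theorem ultrafilter_le_nhds_ultrafilterLim (𝒰 : Ultrafilter (Zar F)) :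
    ↑𝒰 ≤ 𝓝 (ultrafilterLim 𝒰) := by
  rw [show 𝓝 (ultrafilterLim 𝒰) = _ from TopologicalSpace.nhds_generateFrom]
  refine le_iInf₂ fun s ⟨hs, hsub⟩ => le_principal_iff.2 ?_
  rcases hsub with ⟨x, rfl⟩ | ⟨y, rfl⟩
  · exact mem_ultrafilterLimRing.1 hs
  · exact Ultrafilter.compl_mem_iff_notMem.2 fun h => hs (mem_ultrafilterLimRing.2 h)

instance : CompactSpace (Zar F) :=
  isCompact_univ_iff.1 <| isCompact_iff_ultrafilter_le_nhds.2 fun 𝒰 _ =>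
    ⟨_, mem_univ _, ultrafilter_le_nhds_ultrafilterLim 𝒰⟩

end Zar

theorem mem_mIdeal_iff_of_ne_zero {V : Zar F} {a : F} (ha : a ≠ 0) :
    a ∈ mIdeal V ↔ a ∈ V.1 ∧ a⁻¹ ∉ V.1 := by
  simp [mIdeal, ha]

theorem isClopen_setOf_mem_mIdeal (a : F) : IsClopen {V : Zar F | a ∈ mIdeal V} := by
  by_cases ha : a = 0
  · simp [mIdeal, ha, zero_mem, isClopen_univ]
  refine ⟨?_, ?_⟩
  · rw [← isOpen_compl_iff]
    convert (Zar.isOpen_setOf_notMem a).union (Zar.isOpen_setOf_mem a⁻¹) using 1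
    ext V
    simp [mem_mIdeal_iff_of_ne_zero ha, or_iff_not_imp_left]
  · simp only [mem_mIdeal_iff_of_ne_zero ha, ofPred_and]
    exact (Zar.isOpen_setOf_mem a).inter (Zar.isOpen_setOf_notMem a⁻¹)

theorem mem_jSet_iff {Y : Set (Zar F)} {a : F} : a ∈ jSet Y ↔ Y ⊆ {V | a ∈ mIdeal V} := by
  simp [jSet, subset_def]

theorem limPts_eq_derivedSet (X : Set (Zar F)) : limPts X = derivedSet X := by
  ext V
  simp only [limPts, mem_ofPred_eq, mem_derivedSet, accPt_iff_frequently,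
    (nhds_basis_opens V).frequently_iff]
  grind

theorem stmt2_general (X : Set (Zar F)) :
    (⋃ Y ∈ {Y : Set (Zar F) | Y ⊆ X ∧ (X \ Y).Finite}, jSet Y) = jSet (limPts X) := by
  ext a
  simp only [mem_iUnion, mem_ofPred_eq, exists_prop, mem_jSet_iff, limPts_eq_derivedSet,
    derivedSet_subset_iff_finite_sdiff (isClopen_setOf_mem_mIdeal a)]
  constructor
  · rintro ⟨Y, ⟨-, hfin⟩, hY⟩
    exact hfin.subset (sdiff_subset_sdiff_right hY)
  · intro hfin
    exact ⟨X ∩ {V | a ∈ mIdeal V}, ⟨inter_subset_left, by rwa [sdiff_self_inter]⟩,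
      inter_subset_right⟩

theorem stmt2 (X : Set (Zar F)) (hX : X.Infinite) :
    (⋃ Y ∈ {Y : Set (Zar F) | Y ⊆ X ∧ (X \ Y).Finite}, jSet Y) = jSet (limPts X) :=
  stmt2_general X
end

section
/- If X is an infinite subset of Zar(F) such that A(X) = ⋂_{V∈X} V is a local ring, then J(lim X) = ⋂_{U ∈ lim X} 𝔪_U is contained in A(X); in particular J(lim X) is a radical ideal of A(X). -/
open Set

variable {F : Type*} [Field F]

open scoped Classical

section Compactness

noncomputable def zarEmb : Zar F → (F → Bool) := fun V x => decide (x ∈ V.1)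

lemma isOpen_memSet (x : F) : IsOpen {V : Zar F | x ∈ V.1} :=
  TopologicalSpace.GenerateOpen.basic _ (Or.inl ⟨x, rfl⟩)

lemma isOpen_notMemSet (y : F) : IsOpen {V : Zar F | y ∉ V.1} :=
  TopologicalSpace.GenerateOpen.basic _ (Or.inr ⟨y, rfl⟩)

lemma zarEmb_continuous : Continuous (zarEmb (F := F)) := by
  refine continuous_pi fun x => ⟨fun s _ => ?_⟩
  have : (fun V : Zar F => zarEmb V x) ⁻¹' s =
      (if true ∈ s then {V : Zar F | x ∈ V.1} else ∅) ∪
      (if false ∈ s then {V : Zar F | x ∉ V.1} else ∅) := by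
    ext V
    by_cases h : x ∈ V.1 <;> split_ifs with h1 h2 <;>
      simp_all [zarEmb]
  rw [this]
  split_ifs <;>
    simp [isOpen_memSet, isOpen_notMemSet, IsOpen.union, isOpen_empty]

lemma zarEmb_injective : Function.Injective (zarEmb (F := F)) := by
  intro V W h
  apply Subtype.ext
  ext x
  have := congrFun h x
  simpa [zarEmb, decide_eq_decide] using this

lemma zar_topology_eq :
    (Zar.patchTopology F) = TopologicalSpace.induced zarEmb Pi.topologicalSpace := by
  refine le_antisymm (continuous_iff_le_induced.mp zarEmb_continuous) ?_
  rw [Zar.patchTopology, TopologicalSpace.le_generateFrom_iff_subset_isOpen]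
  rintro s (⟨x, rfl⟩ | ⟨y, rfl⟩)
  · refine isOpen_induced_iff.mpr ⟨(fun f : F → Bool => f x) ⁻¹' {true}, ?_, ?_⟩
    · exact IsOpen.preimage (continuous_apply x) (isOpen_discrete _)
    · ext V; simp [zarEmb]
  · refine isOpen_induced_iff.mpr ⟨(fun f : F → Bool => f y) ⁻¹' {false}, ?_, ?_⟩
    · exact IsOpen.preimage (continuous_apply y) (isOpen_discrete _)
    · ext V; simp [zarEmb]

lemma isClosed_coord (x : F) (b : Bool) : IsClosed {f : F → Bool | f x = b} := by
  have : {f : F → Bool | f x = b} = (fun f : F → Bool => f x) ⁻¹' {b} := rfl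
  rw [this]
  exact IsClosed.preimage (continuous_apply x) (isClosed_discrete _)

lemma zar_range_closed : IsClosed (Set.range (zarEmb (F := F))) := by
  have hrange : Set.range (zarEmb (F := F)) =
      ({f : F → Bool | f 1 = true} ∩ {f | f 0 = true} ∩
        (⋂ x : F, ⋂ y : F, {f | f x = false} ∪ {f | f y = false} ∪ {f | f (x + y) = true}) ∩
        (⋂ x : F, ⋂ y : F, {f | f x = false} ∪ {f | f y = false} ∪ {f | f (x * y) = true}) ∩
        (⋂ x : F, {f | f x = false} ∪ {f | f (-x) = true}) ∩
        (⋂ x : F, {f : F → Bool | x = 0} ∪ {f | f x = true} ∪ {f | f x⁻¹ = true})) := by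
    ext f
    constructor
    · rintro ⟨V, rfl⟩
      refine ⟨⟨⟨⟨⟨?_, ?_⟩, ?_⟩, ?_⟩, ?_⟩, ?_⟩
      · simp only [zarEmb, mem_setOf_eq, decide_eq_true_iff]; exact V.1.one_mem
      · simp only [zarEmb, mem_setOf_eq, decide_eq_true_iff]; exact V.1.zero_mem
      · refine mem_iInter.mpr fun x => mem_iInter.mpr fun y => ?_
        by_cases hx : x ∈ V.1
        · by_cases hy : y ∈ V.1
          · exact Or.inr (by simp [zarEmb, add_mem hx hy])
          · exact Or.inl (Or.inr (by simp [zarEmb, hy]))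
        · exact Or.inl (Or.inl (by simp [zarEmb, hx]))
      · refine mem_iInter.mpr fun x => mem_iInter.mpr fun y => ?_
        by_cases hx : x ∈ V.1
        · by_cases hy : y ∈ V.1
          · exact Or.inr (by simp [zarEmb, mul_mem hx hy])
          · exact Or.inl (Or.inr (by simp [zarEmb, hy]))
        · exact Or.inl (Or.inl (by simp [zarEmb, hx]))
      · refine mem_iInter.mpr fun x => ?_
        by_cases hx : x ∈ V.1
        · exact Or.inr (by simp [zarEmb, neg_mem hx])
        · exact Or.inl (by simp [zarEmb, hx])
      · refine mem_iInter.mpr fun x => ?_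
        by_cases hx : x = 0
        · exact Or.inl (Or.inl hx)
        · rcases V.2 x hx with h | h
          · exact Or.inl (Or.inr (by simp [zarEmb, h]))
          · exact Or.inr (by simp [zarEmb, h])
    · rintro ⟨⟨⟨⟨⟨h1, h0⟩, hadd⟩, hmul⟩, hneg⟩, hval⟩
      have hadd' : ∀ x y : F, f x = true → f y = true → f (x + y) = true := by
        intro x y hx hy
        rcases mem_iInter.mp (mem_iInter.mp hadd x) y with ((h | h) | h) <;>
          simp_all
      have hmul' : ∀ x y : F, f x = true → f y = true → f (x * y) = true := by
        intro x y hx hy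
        rcases mem_iInter.mp (mem_iInter.mp hmul x) y with ((h | h) | h) <;>
          simp_all
      have hneg' : ∀ x : F, f x = true → f (-x) = true := by
        intro x hx
        rcases mem_iInter.mp hneg x with h | h <;> simp_all
      let Vs : Subring F :=
        { carrier := {x | f x = true}
          one_mem' := h1
          zero_mem' := h0
          add_mem' := fun hx hy => hadd' _ _ hx hy
          mul_mem' := fun hx hy => hmul' _ _ hx hy
          neg_mem' := fun hx => hneg' _ hx }
      have hmemVs : ∀ x : F, x ∈ Vs ↔ f x = true := fun x => Iff.rfl
      refine ⟨⟨Vs, ?_⟩, ?_⟩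
      · intro t ht
        rcases mem_iInter.mp hval t with ((h | h) | h)
        · exact absurd h ht
        · exact Or.inl ((hmemVs t).mpr h)
        · exact Or.inr ((hmemVs t⁻¹).mpr h)
      · funext x
        show decide (x ∈ Vs) = f x
        cases hx : f x
        · exact decide_eq_false (fun hc => by rw [(hmemVs x).mp hc] at hx; exact Bool.noConfusion hx)
        · exact decide_eq_true ((hmemVs x).mpr hx)
  rw [hrange]
  refine (((((isClosed_coord 1 true).inter (isClosed_coord 0 true)).inter ?_).inter ?_).inter
      ?_).inter ?_
  · exact isClosed_iInter fun x => isClosed_iInter fun y =>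
      (((isClosed_coord x false).union (isClosed_coord y false)).union
        (isClosed_coord (x + y) true))
  · exact isClosed_iInter fun x => isClosed_iInter fun y =>
      (((isClosed_coord x false).union (isClosed_coord y false)).union
        (isClosed_coord (x * y) true))
  · exact isClosed_iInter fun x =>
      ((isClosed_coord x false).union (isClosed_coord (-x) true))
  · refine isClosed_iInter fun x => ?_
    by_cases hx : x = 0
    · have : ({f : F → Bool | x = 0} ∪ {f | f x = true} ∪ {f | f x⁻¹ = true}) = univ := by
        ext f; simp [hx]
      rw [this]; exact isClosed_univ
    · have : ({f : F → Bool | x = 0} ∪ {f | f x = true} ∪ {f | f x⁻¹ = true}) =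
          ({f : F → Bool | f x = true} ∪ {f | f x⁻¹ = true}) := by
        ext f; simp [hx]
      rw [this]
      exact ((isClosed_coord x true).union (isClosed_coord x⁻¹ true))

instance : CompactSpace (Zar F) := by
  have h : Topology.IsClosedEmbedding (zarEmb (F := F)) :=
    ⟨⟨⟨zar_topology_eq⟩, zarEmb_injective⟩, zar_range_closed⟩
  exact h.compactSpace

lemma exists_limPt {X : Set (Zar F)} (hX : X.Infinite) : ∃ U, U ∈ limPts X := by
  have h1 : (Filter.cofinite ⊓ Filter.principal X).NeBot :=
    hX.cofinite_inf_principal_neBot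
  obtain ⟨U, hU⟩ := exists_clusterPt_of_compactSpace (Filter.cofinite ⊓ Filter.principal X)
  refine ⟨U, fun O hO hUO => ?_⟩
  have hmem : O ∩ ({U}ᶜ ∩ X) ∈ nhds U ⊓ (Filter.cofinite ⊓ Filter.principal X) := by
    refine Filter.inter_mem ?_ ?_
    · exact Filter.mem_inf_of_left (hO.mem_nhds hUO)
    · refine Filter.mem_inf_of_right (Filter.inter_mem ?_ ?_)
      · exact Filter.mem_inf_of_left ((Set.finite_singleton U).compl_mem_cofinite)
      · exact Filter.mem_inf_of_right (Filter.mem_principal_self X)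
  have := hU
  rw [ClusterPt] at this
  obtain ⟨W, hW⟩ := this.nonempty_of_mem hmem
  exact ⟨W, hW.2.2, hW.2.1, hW.1⟩

lemma limPts_mono {X Y : Set (Zar F)} (h : Y ⊆ X) : limPts Y ⊆ limPts X := by
  intro U hU O hO hUO
  obtain ⟨W, hWY, hWU, hWO⟩ := hU O hO hUO
  exact ⟨W, h hWY, hWU, hWO⟩

end Compactness

section MIdeal

lemma mIdeal_zero_mem (V : Zar F) : (0 : F) ∈ mIdeal V := ⟨V.1.zero_mem, Or.inl rfl⟩

lemma mIdeal_one_not_mem (V : Zar F) : (1 : F) ∉ mIdeal V := by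
  rintro ⟨h1, h2 | h2⟩
  · exact one_ne_zero h2
  · rw [inv_one] at h2; exact h2 V.1.one_mem

lemma val_inv_mem (V : Zar F) {x : F} (hx : x ∈ V.1) (hnx : x ∉ mIdeal V) : x⁻¹ ∈ V.1 := by
  by_contra h; exact hnx ⟨hx, Or.inr h⟩

lemma mIdeal_mul_mem (V : Zar F) {v m : F} (hv : v ∈ V.1) (hm : m ∈ mIdeal V) :
    v * m ∈ mIdeal V := by
  refine ⟨V.1.mul_mem hv hm.1, ?_⟩
  by_cases h0 : v * m = 0
  · exact Or.inl h0
  · rcases mul_ne_zero_iff.mp h0 with ⟨hv0, hm0⟩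
    refine Or.inr fun hc => ?_
    rcases hm.2 with h | h
    · exact hm0 h
    · apply h
      have e : m⁻¹ = v * (v * m)⁻¹ := by
        rw [mul_inv, ← mul_assoc, mul_inv_cancel₀ hv0, one_mul]
      rw [e]; exact V.1.mul_mem hv hc

lemma mIdeal_sub_mem (V : Zar F) {x y : F} (hx : x ∈ mIdeal V) (hy : y ∈ mIdeal V) :
    x - y ∈ mIdeal V := by
  refine ⟨V.1.sub_mem hx.1 hy.1, ?_⟩
  by_cases hd : x - y = 0
  · exact Or.inl hd
  refine Or.inr fun hz => ?_
  by_cases hx0 : x = 0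
  · rcases hy.2 with h | h
    · exact hd (by rw [hx0, h, sub_zero])
    · apply h
      have e : y⁻¹ = -(x - y)⁻¹ := by rw [hx0, zero_sub, inv_neg, neg_neg]
      rw [e]; exact V.1.neg_mem hz
  by_cases hy0 : y = 0
  · rcases hx.2 with h | h
    · exact hx0 h
    · apply h
      have e : x⁻¹ = (x - y)⁻¹ := by rw [hy0, sub_zero]
      rw [e]; exact hz
  rcases hx.2 with h | hxi
  · exact hx0 h
  rcases hy.2 with h | hyi
  · exact hy0 h
  rcases V.2 (x * y⁻¹) (mul_ne_zero hx0 (inv_ne_zero hy0)) with hc | hc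
  · apply hyi
    have e : y⁻¹ = (x - y)⁻¹ * (x * y⁻¹ - 1) := by
      field_simp
    rw [e]
    exact V.1.mul_mem hz (V.1.sub_mem hc V.1.one_mem)
  · apply hxi
    rw [mul_inv, inv_inv] at hc
    have e : x⁻¹ = (x - y)⁻¹ * (1 - x⁻¹ * y) := by
      field_simp
    rw [e]
    exact V.1.mul_mem hz (V.1.sub_mem V.1.one_mem hc)

end MIdeal

section GeomS

def geomS (t : F) (n : ℕ) : F := ∑ i ∈ Finset.range (n + 1), t ^ i

lemma geomS_zero (t : F) : geomS t 0 = 1 := by simp [geomS]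

lemma geomS_mem (V : Zar F) {t : F} (ht : t ∈ V.1) (n : ℕ) : geomS t n ∈ V.1 :=
  Subring.sum_mem _ fun i _ => Subring.pow_mem _ ht i

lemma geomS_succ (t : F) (k : ℕ) : geomS t (k + 1) = 1 + t * geomS t k := by
  rw [geomS, Finset.sum_range_succ']
  simp only [pow_zero, pow_succ']
  rw [← Finset.mul_sum, add_comm, geomS]

lemma geomS_add (t : F) (m k : ℕ) :
    geomS t (m + k + 1) = geomS t m + t ^ (m + 1) * geomS t k := by
  have h : (m + k + 1) + 1 = (m + 1) + (k + 1) := by ring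
  rw [geomS, h, Finset.sum_range_add]
  congr 1
  rw [geomS, Finset.mul_sum]
  exact Finset.sum_congr rfl fun i _ => pow_add t (m + 1) i

lemma geomS_inv {t : F} (ht : t ≠ 0) (N : ℕ) : geomS t N = t ^ N * geomS t⁻¹ N := by
  rw [geomS, ← Finset.sum_range_reflect (fun i => t ^ i) (N + 1), geomS, Finset.mul_sum]
  refine Finset.sum_congr rfl fun i hi => ?_
  have hiN : i ≤ N := Nat.lt_succ_iff.mp (Finset.mem_range.mp hi)
  have : N + 1 - 1 - i = N - i := by omega
  rw [this, inv_pow, pow_sub₀ t ht hiN]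

end GeomS

section Comb

lemma bad_mod (P : ℕ → Prop)
    (hstep : ∀ m n, m < n → P n → P m → P (n - m - 1)) (b : ℕ) (hb : P b)
    (hmin : ∀ m, P m → b ≤ m) : ∀ n, P n → (b + 1) ∣ (n + 1) := by
  intro n
  induction n using Nat.strong_induction_on with
  | _ n ih =>
    intro hn
    rcases eq_or_lt_of_le (hmin n hn) with h | h
    · rw [← h]
    · have h1 : P (n - b - 1) := hstep b n h hn hb
      have h2 : n - b - 1 < n := by omega
      have h3 := ih _ h2 h1
      have e : n + 1 = (n - b - 1 + 1) + (b + 1) := by omega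
      rw [e]
      exact Nat.dvd_add h3 (dvd_refl _)

end Comb

section Main

lemma bad_step (V : Zar F) {t : F} (ht : t ≠ 0) (htiV : t⁻¹ ∈ V.1)
    {m n : ℕ} (hmn : m < n) (hn : geomS t n ∈ mIdeal V) (hm : geomS t m ∈ mIdeal V) :
    geomS t (n - m - 1) ∈ mIdeal V := by
  have hk : m + (n - m - 1) + 1 = n := by omega
  have e := geomS_add t m (n - m - 1)
  rw [hk] at e
  have h1 : t ^ (m + 1) * geomS t (n - m - 1) ∈ mIdeal V := by
    have h2 := mIdeal_sub_mem V hn hm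
    rwa [e, add_sub_cancel_left] at h2
  have h2 : (t⁻¹) ^ (m + 1) * (t ^ (m + 1) * geomS t (n - m - 1)) ∈ mIdeal V :=
    mIdeal_mul_mem V (Subring.pow_mem _ htiV _) h1
  rwa [← mul_assoc, inv_pow, inv_mul_cancel₀ (pow_ne_zero _ ht), one_mul] at h2

lemma exists_goodN {t : F} (ht : t ≠ 0) {Z : Set (Zar F)} (hZ : Z.Finite)
    (hZmem : ∀ V ∈ Z, t ∈ V.1 ∧ t⁻¹ ∈ V.1) :
    ∃ N : ℕ, 1 ≤ N ∧ ∀ V ∈ Z, geomS t N ∉ mIdeal V := by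
  classical
  set per : Zar F → ℕ := fun V =>
    if h : ∃ n, geomS t n ∈ mIdeal V then Nat.find h + 1 else 1 with hper
  refine ⟨∏ V ∈ hZ.toFinset, per V, ?_, ?_⟩
  · refine Finset.one_le_prod' fun V _ => ?_
    rw [hper]
    dsimp only
    split <;> omega
  · intro V hV hbad
    have hex : ∃ n, geomS t n ∈ mIdeal V := ⟨_, hbad⟩
    set b := Nat.find hex with hb
    have hbP : geomS t b ∈ mIdeal V := Nat.find_spec hex
    have hbmin : ∀ m, geomS t m ∈ mIdeal V → b ≤ m := fun m hm => Nat.find_le hm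
    have hb1 : 1 ≤ b := by
      rcases Nat.eq_zero_or_pos b with h0 | h
      · exfalso
        have h1 := hbP
        rw [h0, geomS_zero] at h1
        exact mIdeal_one_not_mem V h1
      · exact h
    have hdvd1 : (b + 1) ∣ (∏ V ∈ hZ.toFinset, per V) + 1 := by
      refine bad_mod (fun n => geomS t n ∈ mIdeal V) ?_ b hbP hbmin _ hbad
      intro m n hmn hn hm
      exact bad_step V ht (hZmem V hV).2 hmn hn hm
    have hdvd2 : (b + 1) ∣ (∏ V ∈ hZ.toFinset, per V) := by
      have hpv : per V = b + 1 := by rw [hper]; dsimp only; rw [dif_pos hex]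
      rw [← hpv]
      exact Finset.dvd_prod_of_mem per (hZ.mem_toFinset.mpr hV)
    have hone : (b + 1) ∣ 1 := by
      have h3 := Nat.dvd_sub hdvd1 hdvd2
      simpa using h3
    have := Nat.le_of_dvd one_pos hone
    omega

lemma sigma_props (V : Zar F) {t : F} (hm : t ∈ mIdeal V) {N : ℕ} (hN : 1 ≤ N) :
    geomS t N ∈ V.1 ∧ geomS t N ∉ mIdeal V ∧ 1 - (geomS t N)⁻¹ ∈ mIdeal V := by
  obtain ⟨k, rfl⟩ : ∃ k, N = k + 1 := ⟨N - 1, by omega⟩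
  have hσe : geomS t (k + 1) = 1 + t * geomS t k := geomS_succ t k
  have hσV : geomS t (k + 1) ∈ V.1 := geomS_mem V hm.1 _
  have hts : t * geomS t k ∈ mIdeal V := by
    have h1 := mIdeal_mul_mem V (geomS_mem V hm.1 k) hm
    rwa [mul_comm] at h1
  have hσnm : geomS t (k + 1) ∉ mIdeal V := by
    intro hc
    have h1 : geomS t (k + 1) - t * geomS t k ∈ mIdeal V := mIdeal_sub_mem V hc hts
    rw [hσe, add_sub_cancel_right] at h1
    exact mIdeal_one_not_mem V h1
  refine ⟨hσV, hσnm, ?_⟩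
  have hσ0 : geomS t (k + 1) ≠ 0 := fun h => hσnm (h ▸ mIdeal_zero_mem V)
  have hinv : (geomS t (k + 1))⁻¹ ∈ V.1 := val_inv_mem V hσV hσnm
  have e : 1 - (geomS t (k + 1))⁻¹ = (geomS t (k + 1))⁻¹ * (geomS t (k + 1) - 1) := by
    rw [mul_sub, inv_mul_cancel₀ hσ0, mul_one]
  rw [e]
  refine mIdeal_mul_mem V hinv ?_
  rw [hσe, add_sub_cancel_left]
  exact hts

end Main

theorem stmt9 (X : Set (Zar F)) (hX : X.Infinite) (hloc : IsLocalRing (ASub X)) :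
    jSet (limPts X) ⊆ aSet X := by
  intro t ht
  have htJ : ∀ U ∈ limPts X, t ∈ mIdeal U := by
    intro U hU
    have h1 := ht
    rw [jSet] at h1
    exact mem_iInter₂.mp h1 U hU
  by_cases ht0 : t = 0
  · subst ht0
    rw [aSet]
    exact mem_iInter₂.mpr fun V _ => V.1.zero_mem
  by_contra htA
  obtain ⟨V₀, hV₀X, hV₀t⟩ : ∃ V ∈ X, t ∉ V.1 := by
    by_contra h
    push_neg at h
    apply htA
    rw [aSet]
    exact mem_iInter₂.mpr h
  have hA_le : ∀ V ∈ X, ∀ x : F, x ∈ ASub X → x ∈ V.1 := by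
    intro V hV x hx
    rw [ASub] at hx
    exact Subring.mem_iInf.mp (Subring.mem_iInf.mp hx V) hV
  have hYfin : {V : Zar F | V ∈ X ∧ t ∉ V.1}.Finite := by
    rw [← Set.not_infinite]
    intro hinf
    obtain ⟨U, hU⟩ := exists_limPt hinf
    have hUX : U ∈ limPts X := limPts_mono (fun V hV => hV.1) hU
    have htU : t ∈ mIdeal U := htJ U hUX
    obtain ⟨W, hWY, -, hWO⟩ := hU {V : Zar F | t ∈ V.1} (isOpen_memSet t) htU.1
    exact hWY.2 hWO
  have hZ2fin : {V : Zar F | V ∈ X ∧ t⁻¹ ∈ V.1}.Finite := by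
    rw [← Set.not_infinite]
    intro hinf
    obtain ⟨U, hU⟩ := exists_limPt hinf
    have hUX : U ∈ limPts X := limPts_mono (fun V hV => hV.1) hU
    have htU : t ∈ mIdeal U := htJ U hUX
    have hinvU : t⁻¹ ∉ U.1 := htU.2.resolve_left ht0
    obtain ⟨W, hWZ, -, hWO⟩ := hU {V : Zar F | t⁻¹ ∉ V.1} (isOpen_notMemSet t⁻¹) hinvU
    exact hWO hWZ.2
  have hWinf : (X \ ({V : Zar F | V ∈ X ∧ t ∉ V.1} ∪ {V : Zar F | V ∈ X ∧ t⁻¹ ∈ V.1})).Infinite :=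
    hX.diff (hYfin.union hZ2fin)
  obtain ⟨V₁, hV₁⟩ := hWinf.nonempty
  have hV₁X : V₁ ∈ X := hV₁.1
  have hV₁m : t ∈ mIdeal V₁ := by
    refine ⟨?_, Or.inr ?_⟩
    · by_contra h
      exact hV₁.2 (Or.inl ⟨hV₁.1, h⟩)
    · by_contra h
      exact hV₁.2 (Or.inr ⟨hV₁.1, h⟩)
  have hZfin : {V : Zar F | V ∈ X ∧ t ∈ V.1 ∧ t⁻¹ ∈ V.1}.Finite :=
    hZ2fin.subset fun V hV => ⟨hV.1, hV.2.2⟩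
  obtain ⟨N, hN1, hNgood⟩ := exists_goodN ht0 hZfin (fun V hV => ⟨hV.2.1, hV.2.2⟩)
  set σ := geomS t N with hσdef
  have hσ0 : σ ≠ 0 := by
    intro h
    apply (sigma_props V₁ hV₁m hN1).2.1
    rw [← hσdef, h]
    exact mIdeal_zero_mem V₁
  set s := σ⁻¹ with hsdef
  have hYprop : ∀ V : Zar F, V ∈ X → t ∉ V.1 → s ∈ mIdeal V := by
    intro V hVX hVt
    have hti : t⁻¹ ∈ V.1 := (V.2 t ht0).resolve_left hVt
    have htim : t⁻¹ ∈ mIdeal V := ⟨hti, Or.inr (by rw [inv_inv]; exact hVt)⟩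
    have hfac : σ = t ^ N * geomS t⁻¹ N := geomS_inv ht0 N
    have hprops := sigma_props V htim hN1
    have hσ'inv : (geomS t⁻¹ N)⁻¹ ∈ V.1 := val_inv_mem V hprops.1 hprops.2.1
    have hpm : (t⁻¹) ^ N ∈ mIdeal V := by
      obtain ⟨k, rfl⟩ : ∃ k, N = k + 1 := ⟨N - 1, by omega⟩
      rw [pow_succ]
      exact mIdeal_mul_mem V (Subring.pow_mem _ hti k) htim
    have e : s = (geomS t⁻¹ N)⁻¹ * (t⁻¹) ^ N := by
      rw [hsdef, hfac, mul_inv, inv_pow, mul_comm]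
    rw [e]
    exact mIdeal_mul_mem V hσ'inv hpm
  have hmemA : ∀ V, V ∈ X → s ∈ V.1 ∧ 1 - s ∈ V.1 := by
    intro V hVX
    by_cases hVt : t ∈ V.1
    · by_cases hVti : t⁻¹ ∈ V.1
      · have hσV : σ ∈ V.1 := geomS_mem V hVt N
        have hσnm : σ ∉ mIdeal V := hNgood V ⟨hVX, hVt, hVti⟩
        have hs1 : s ∈ V.1 := val_inv_mem V hσV hσnm
        exact ⟨hs1, V.1.sub_mem V.1.one_mem hs1⟩
      · have hm : t ∈ mIdeal V := ⟨hVt, Or.inr hVti⟩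
        obtain ⟨h1, h2, h3⟩ := sigma_props V hm hN1
        have hs1 : s ∈ V.1 := val_inv_mem V h1 h2
        exact ⟨hs1, V.1.sub_mem V.1.one_mem hs1⟩
    · have h1 := hYprop V hVX hVt
      exact ⟨h1.1, V.1.sub_mem V.1.one_mem h1.1⟩
  have hsA : s ∈ ASub X := by
    rw [ASub]
    exact Subring.mem_iInf.mpr fun V => Subring.mem_iInf.mpr fun hV => (hmemA V hV).1
  have hbA : 1 - s ∈ ASub X := by
    rw [ASub]
    exact Subring.mem_iInf.mpr fun V => Subring.mem_iInf.mpr fun hV => (hmemA V hV).2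
  haveI := hloc
  have hab : (⟨s, hsA⟩ : ASub X) + ⟨1 - s, hbA⟩ = 1 := by
    apply Subtype.ext
    show s + (1 - s) = 1
    ring
  rcases IsLocalRing.isUnit_or_isUnit_of_add_one hab with hu | hu
  · obtain ⟨c, hc⟩ := isUnit_iff_exists_inv.mp hu
    have hc' : s * (c : F) = 1 := by
      have h1 := congrArg (fun z : ASub X => (z : F)) hc
      simpa using h1
    have hsm : s ∈ mIdeal V₀ := hYprop V₀ hV₀X hV₀t
    rcases hsm.2 with h | h
    · rw [h, zero_mul] at hc'
      exact zero_ne_one hc'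
    · apply h
      rw [inv_eq_of_mul_eq_one_right hc']
      exact hA_le V₀ hV₀X _ c.2
  · obtain ⟨c, hc⟩ := isUnit_iff_exists_inv.mp hu
    have hc' : (1 - s) * (c : F) = 1 := by
      have h1 := congrArg (fun z : ASub X => (z : F)) hc
      simpa using h1
    have hbm : 1 - s ∈ mIdeal V₁ := (sigma_props V₁ hV₁m hN1).2.2
    rcases hbm.2 with h | h
    · rw [h, zero_mul] at hc'
      exact zero_ne_one hc'
    · apply h
      rw [inv_eq_of_mul_eq_one_right hc']
      exact hA_le V₁ hV₁X _ c.2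
end
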